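/- Let J : ℝⁿ × ℝ → ℝ be continuously differentiable in its first argument with gradient ∇ₐJ, and let μ > 0 be such that for every t and every a, b ∈ ℝⁿ, ⟨∇ₐJ(a,t) − ∇ₐJ(b,t), a − b⟩ ≥ μ ‖a − b‖² (J(·,t) is μ-strongly convex). Let a⋆ : ℝ → ℝⁿ be differentiable with ∇ₐJ(a⋆(t), t) = 0 for all t (a⋆(t) is the minimizer of J(·,t)) and ‖d a⋆(t)/dt‖ ≤ M for all t and some M > 0. Let c > 0 and let a : [0, ∞) → ℝⁿ satisfy a′(t) = −c ∇ₐJ(a(t), t). Then for all t ≥ 0, ‖a(t) − a⋆(t)‖ ≤ e^{−cμt} ‖a(0) − a⋆(0)‖ + M/(cμ). In particular, for any ε > 0, choosing the gain c large enough guarantees that a(t) eventually remains within ε of the time-varying minimizer a⋆(t). -/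

import Mathlib

open scoped RealInnerProductSpace
open Set

/-! The tracking error `e = a - a⋆` satisfies `⟪e, e'⟫ ≤ -cμ ‖e‖² + M ‖e‖`, by strong monotonicity
of the gradient and `∇J(a⋆) = 0`. Hence the right Dini derivative of `‖e‖` is at most
`-cμ ‖e‖ + M` (where `e = 0` this uses `‖e'‖ = ‖a⋆'‖ ≤ M` instead), and Grönwall's inequality
for Dini derivatives gives `‖e t‖ ≤ e^{-cμt} ‖e 0‖ + M / (cμ) (1 - e^{-cμt})`. -/

section InnerProductSpace

variable {E : Type*} [NormedAddCommGroup E] [InnerProductSpace ℝ E]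

theorem HasDerivAt.norm_of_ne_zero {f : ℝ → E} {f' : E} {x : ℝ} (hf : HasDerivAt f f' x)
    (h0 : f x ≠ 0) : HasDerivAt (‖f ·‖) (⟪f x, f'⟫ / ‖f x‖) x := by
  have h := hf.norm_sq.sqrt (by positivity)
  simp only [Real.sqrt_sq (norm_nonneg _)] at h
  convert h using 1
  field_simp

theorem norm_le_gronwallBound_of_inner_deriv_le {f f' : ℝ → E} {K ε a b : ℝ}
    (hf : ∀ t ∈ Icc a b, HasDerivAt f (f' t) t)
    (hinner : ∀ t ∈ Ico a b, ⟪f t, f' t⟫ ≤ K * ‖f t‖ ^ 2 + ε * ‖f t‖)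
    (hzero : ∀ t ∈ Ico a b, f t = 0 → ‖f' t‖ ≤ ε) :
    ∀ t ∈ Icc a b, ‖f t‖ ≤ gronwallBound ‖f a‖ K ε (t - a) := by
  refine le_gronwallBound_of_liminf_deriv_right_le (f' := fun t => K * ‖f t‖ + ε)
    (fun t ht => (hf t ht).continuousAt.norm.continuousWithinAt) ?_ le_rfl fun _ _ => le_rfl
  intro t ht r hr
  have hft := hf t (Ico_subset_Icc_self ht)
  by_cases h0 : f t = 0
  · refine hft.hasDerivWithinAt.liminf_right_slope_norm_le ?_
    have := hzero t ht h0
    simp only [h0, norm_zero, mul_zero, zero_add] at hr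
    linarith
  · have hpos : 0 < ‖f t‖ := norm_pos_iff.2 h0
    have hderiv : ⟪f t, f' t⟫ / ‖f t‖ < r := by
      refine lt_of_le_of_lt ?_ hr
      rw [div_le_iff₀ hpos]
      linarith [hinner t ht]
    refine ((hft.norm_of_ne_zero h0).hasDerivWithinAt.liminf_right_slope_le hderiv).mono ?_
    intro z hz
    rwa [slope_def_field, div_eq_inv_mul] at hz

theorem inner_sub_neg_smul_sub_le {G : E → E} {μ c M : ℝ} {x y v : E}
    (hG : μ * ‖x - y‖ ^ 2 ≤ ⟪G x - G y, x - y⟫) (hGy : G y = 0) (hc : 0 ≤ c) (hv : ‖v‖ ≤ M) :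
    ⟪x - y, -c • G x - v⟫ ≤ -(c * μ) * ‖x - y‖ ^ 2 + M * ‖x - y‖ := by
  have hdrift : ⟪x - y, -v⟫ ≤ M * ‖x - y‖ :=
    calc ⟪x - y, -v⟫ ≤ ‖x - y‖ * ‖-v‖ := real_inner_le_norm _ _
      _ ≤ M * ‖x - y‖ := by rw [norm_neg, mul_comm]; gcongr
  rw [hGy, sub_zero, real_inner_comm] at hG
  rw [sub_eq_add_neg (-c • G x), inner_add_right, inner_smul_right]
  nlinarith [mul_le_mul_of_nonneg_left hG hc]

end InnerProductSpace

theorem gronwallBound_le_of_neg {δ K ε x : ℝ} (hK : K < 0) (hε : 0 ≤ ε) :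
    gronwallBound δ K ε x ≤ δ * Real.exp (K * x) + ε / -K := by
  rw [gronwallBound_of_K_ne_0 hK.ne]
  have : 0 ≤ ε / -K * Real.exp (K * x) := by
    have := Real.exp_pos (K * x)
    have : 0 < -K := neg_pos.2 hK
    positivity
  have : ε / K * (Real.exp (K * x) - 1) = ε / -K - ε / -K * Real.exp (K * x) := by
    rw [div_neg]; ring
  linarith

theorem gradient_flow_tracks_moving_minimizer_general
    (n : ℕ) (J : EuclideanSpace ℝ (Fin n) → ℝ → ℝ)
    (μ : ℝ) (hμ : 0 < μ)
    (hsc : ∀ (t : ℝ) (a b : EuclideanSpace ℝ (Fin n)),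
      μ * ‖a - b‖ ^ 2 ≤ ⟪gradient (fun x => J x t) a - gradient (fun x => J x t) b, a - b⟫)
    (astar : ℝ → EuclideanSpace ℝ (Fin n))
    (hastar_diff : Differentiable ℝ astar)
    (hcrit : ∀ t : ℝ, gradient (fun x => J x t) (astar t) = 0)
    (M : ℝ) (hrate : ∀ t : ℝ, ‖deriv astar t‖ ≤ M)
    (c : ℝ) (hc : 0 < c)
    (a : ℝ → EuclideanSpace ℝ (Fin n))
    (ha : ∀ t ≥ (0:ℝ), HasDerivAt a (-c • gradient (fun x => J x t) (a t)) t) :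
    ∀ t ≥ (0:ℝ),
      ‖a t - astar t‖ ≤ Real.exp (-(c * μ * t)) * ‖a 0 - astar 0‖ + M / (c * μ) := by
  intro t ht
  have hM : 0 ≤ M := (norm_nonneg _).trans (hrate 0)
  have hbound := norm_le_gronwallBound_of_inner_deriv_le (f := fun s => a s - astar s)
    (f' := fun s => -c • gradient (fun x => J x s) (a s) - deriv astar s) (K := -(c * μ))
    (fun s hs => (ha s hs.1).sub (hastar_diff s).hasDerivAt)
    (fun s _ => inner_sub_neg_smul_sub_le (hsc s _ _) (hcrit s) hc.le (hrate s))
    (fun s _ h => by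
      rw [sub_eq_zero] at h
      rw [h, hcrit, smul_zero, zero_sub, norm_neg]
      exact hrate s)
    t ⟨ht, le_rfl⟩
  calc ‖a t - astar t‖ ≤ gronwallBound ‖a 0 - astar 0‖ (-(c * μ)) M (t - 0) := hbound
    _ ≤ ‖a 0 - astar 0‖ * Real.exp (-(c * μ) * (t - 0)) + M / -(-(c * μ)) :=
      gronwallBound_le_of_neg (neg_neg_of_pos (mul_pos hc hμ)) hM
    _ = Real.exp (-(c * μ * t)) * ‖a 0 - astar 0‖ + M / (c * μ) := by
      rw [sub_zero, neg_neg, neg_mul, mul_comm]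

/-- Quantitative tracking bound for the gradient flow of a time-varying strongly convex
objective whose minimizer moves with bounded rate: the distance to the moving minimizer
decays exponentially up to the offset `M / (c * μ)`. -/
theorem gradient_flow_tracks_moving_minimizer
    (n : ℕ) (J : EuclideanSpace ℝ (Fin n) → ℝ → ℝ)
    (hJ : ∀ t : ℝ, ContDiff ℝ 1 (fun a => J a t))
    (μ : ℝ) (hμ : 0 < μ)
    (hsc : ∀ (t : ℝ) (a b : EuclideanSpace ℝ (Fin n)),
      μ * ‖a - b‖ ^ 2 ≤ ⟪gradient (fun x => J x t) a - gradient (fun x => J x t) b, a - b⟫)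
    (astar : ℝ → EuclideanSpace ℝ (Fin n))
    (hastar_diff : Differentiable ℝ astar)
    (hcrit : ∀ t : ℝ, gradient (fun x => J x t) (astar t) = 0)
    (M : ℝ) (hM : 0 < M) (hrate : ∀ t : ℝ, ‖deriv astar t‖ ≤ M)
    (c : ℝ) (hc : 0 < c)
    (a : ℝ → EuclideanSpace ℝ (Fin n))
    (ha : ∀ t ≥ (0:ℝ), HasDerivAt a (-c • gradient (fun x => J x t) (a t)) t) :
    ∀ t ≥ (0:ℝ),
      ‖a t - astar t‖ ≤ Real.exp (-(c * μ * t)) * ‖a 0 - astar 0‖ + M / (c * μ) :=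
  gradient_flow_tracks_moving_minimizer_general n J μ hμ hsc astar hastar_diff hcrit M hrate c hc a
    ha
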